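/- arXiv:2605.13271 — 3 statements merged into one kernel-verified Lean document; each statement's English description precedes it below -/
import Mathlib

section
/- Fix η ∈ (0,1), γ > 0, r > 0, set s₀ = (1−η)/(2η), a = √(2π), c_q = a r/2, c_p = a/(2r), σ_q(θ) = √(s₀ + γ sin²θ), σ_p(θ) = √(s₀ + γ cos²θ), u_q(θ) = c_q/σ_q(θ), u_p(θ) = c_p/σ_p(θ), and define the balance function B(θ) = r²·φ(u_q(θ))/σ_q(θ)³ − φ(u_p(θ))/σ_p(θ)³. Suppose the regime condition holds: σ_q(θ) < c_q/√3 and σ_p(θ) < c_p/√3 for every θ ∈ [0, π/2] (equivalently u_q(θ) > √3 and u_p(θ) > √3 throughout). Then B is strictly monotone increasing on [0, π/2]. -/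
/-- The standard normal density `φ(x) = e^{-x²/2}/√(2π)`. -/
noncomputable def gaussPdf (x : ℝ) : ℝ := Real.exp (-x ^ 2 / 2) / Real.sqrt (2 * Real.pi)

/-- The Gaussian tail `Q(x) = ∫_x^∞ φ(t) dt`. -/
noncomputable def gaussTail (x : ℝ) : ℝ := ∫ t in Set.Ioi x, gaussPdf t

/-- Isotropic loss-induced spread `s₀ = (1-η)/(2η)`. -/
noncomputable def s0 (η : ℝ) : ℝ := (1 - η) / (2 * η)

/-- The GKP lattice constant `a = √(2π)`. -/
noncomputable def aGKP : ℝ := Real.sqrt (2 * Real.pi)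

/-- Effective spread `σ_q(θ) = √(s₀ + γ sin²θ)`. -/
noncomputable def sigq (η γ θ : ℝ) : ℝ := Real.sqrt (s0 η + γ * Real.sin θ ^ 2)

/-- Effective spread `σ_p(θ) = √(s₀ + γ cos²θ)`. -/
noncomputable def sigp (η γ θ : ℝ) : ℝ := Real.sqrt (s0 η + γ * Real.cos θ ^ 2)

/-- Normalized correction radius `u_q(θ) = (a r / 2) / σ_q(θ)`. -/
noncomputable def uq (η γ r θ : ℝ) : ℝ := aGKP * r / 2 / sigq η γ θ

/-- Normalized correction radius `u_p(θ) = (a / (2r)) / σ_p(θ)`. -/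
noncomputable def up (η γ r θ : ℝ) : ℝ := aGKP / (2 * r) / sigp η γ θ

/-- The balance function `B(θ) = r²·φ(u_q)/σ_q³ − φ(u_p)/σ_p³`. -/
noncomputable def balance (η γ r θ : ℝ) : ℝ :=
  r ^ 2 * gaussPdf (uq η γ r θ) / sigq η γ θ ^ 3 - gaussPdf (up η γ r θ) / sigp η γ θ ^ 3

/-- Quadrature error probability `P_q(θ) = 2 Q(u_q(θ))`. -/
noncomputable def Pq (η γ r θ : ℝ) : ℝ := 2 * gaussTail (uq η γ r θ)

/-- Quadrature error probability `P_p(θ) = 2 Q(u_p(θ))`. -/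
noncomputable def Pp (η γ r θ : ℝ) : ℝ := 2 * gaussTail (up η γ r θ)

/-- Logical error rate `P_err(θ) = 1 − (1 − P_q(θ))(1 − P_p(θ))`. -/
noncomputable def Perr (η γ r θ : ℝ) : ℝ := 1 - (1 - Pq η γ r θ) * (1 - Pp η γ r θ)

/-!
Both terms of `B` have the shape `φ(c/σ)/σ³ = exp(-c²/(2σ²) - 3 log σ)/√(2π)`. The exponent
increases with `σ` while `c/σ > √3`: for `σ₁ < σ₂` with `c² > 3σ₂²`, `log x ≤ x - 1` gives
`3 log(σ₂/σ₁) ≤ 3(σ₂/σ₁ - 1) < (c²/2)(1/σ₁² - 1/σ₂²)`. On `[0, π/2]` the spread `σ_q`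
increases and `σ_p` decreases, so the first term of `B` increases and the subtracted one
decreases.
-/

open Real Set

lemma s0_pos {η : ℝ} (hη : η ∈ Ioo (0 : ℝ) 1) : 0 < s0 η :=
  div_pos (by linarith [hη.2]) (by linarith [hη.1])

lemma sigq_pos {η γ : ℝ} (hs : 0 < s0 η) (hγ : 0 ≤ γ) (θ : ℝ) : 0 < sigq η γ θ :=
  sqrt_pos.mpr (by positivity)

lemma sigp_pos {η γ : ℝ} (hs : 0 < s0 η) (hγ : 0 ≤ γ) (θ : ℝ) : 0 < sigp η γ θ :=
  sqrt_pos.mpr (by positivity)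

lemma sigq_strictMonoOn {η γ : ℝ} (hs : 0 ≤ s0 η) (hγ : 0 < γ) :
    StrictMonoOn (sigq η γ) (Icc 0 (π / 2)) := by
  intro θ₁ h₁ θ₂ h₂ h₁₂
  have hsin : sin θ₁ < sin θ₂ :=
    strictMonoOn_sin ⟨by linarith [h₁.1, pi_pos], h₁.2⟩ ⟨by linarith [h₂.1, pi_pos], h₂.2⟩ h₁₂
  have hsin₁ : 0 ≤ sin θ₁ := sin_nonneg_of_nonneg_of_le_pi h₁.1 (by linarith [h₁.2, pi_pos])
  exact sqrt_lt_sqrt (by positivity) (by gcongr)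

lemma sigp_strictAntiOn {η γ : ℝ} (hs : 0 ≤ s0 η) (hγ : 0 < γ) :
    StrictAntiOn (sigp η γ) (Icc 0 (π / 2)) := by
  intro θ₁ h₁ θ₂ h₂ h₁₂
  have hcos : cos θ₂ < cos θ₁ :=
    strictAntiOn_cos ⟨h₁.1, by linarith [h₁.2, pi_pos]⟩ ⟨h₂.1, by linarith [h₂.2, pi_pos]⟩ h₁₂
  have hcos₂ : 0 ≤ cos θ₂ := cos_nonneg_of_mem_Icc ⟨by linarith [h₂.1, pi_pos], h₂.2⟩
  exact sqrt_lt_sqrt (by positivity) (by gcongr)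

lemma gaussPdf_div_div_pow_three (c : ℝ) {σ : ℝ} (hσ : 0 < σ) :
    gaussPdf (c / σ) / σ ^ 3 = exp (-(c ^ 2 / (2 * σ ^ 2)) - 3 * log σ) / sqrt (2 * π) := by
  have hpow : exp (3 * log σ) = σ ^ 3 := by
    rw [← exp_log (pow_pos hσ 3), log_pow]
    norm_num
  rw [exp_sub, hpow, gaussPdf, div_pow]
  field_simp

lemma neg_sq_div_sub_log_lt {c σ₁ σ₂ : ℝ} (hσ₁ : 0 < σ₁) (h₁₂ : σ₁ < σ₂)
    (hc : 3 * σ₂ ^ 2 < c ^ 2) :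
    -(c ^ 2 / (2 * σ₁ ^ 2)) - 3 * log σ₁ < -(c ^ 2 / (2 * σ₂ ^ 2)) - 3 * log σ₂ := by
  have hσ₂ : 0 < σ₂ := hσ₁.trans h₁₂
  have hlog : log σ₂ - log σ₁ ≤ σ₂ / σ₁ - 1 := by
    rw [← log_div hσ₂.ne' hσ₁.ne']
    exact log_le_sub_one_of_pos (div_pos hσ₂ hσ₁)
  have hpoly : 3 * (σ₂ / σ₁ - 1) < c ^ 2 / (2 * σ₁ ^ 2) - c ^ 2 / (2 * σ₂ ^ 2) := by
    have hnum : 6 * σ₁ * σ₂ ^ 2 * (σ₂ - σ₁) < c ^ 2 * ((σ₂ - σ₁) * (σ₂ + σ₁)) := by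
      have hd : 0 < σ₂ - σ₁ := sub_pos.2 h₁₂
      calc 6 * σ₁ * σ₂ ^ 2 * (σ₂ - σ₁) < 3 * σ₂ ^ 2 * ((σ₂ - σ₁) * (σ₂ + σ₁)) := by
            nlinarith [mul_pos (mul_pos hd hd) (pow_pos hσ₂ 2)]
        _ < c ^ 2 * ((σ₂ - σ₁) * (σ₂ + σ₁)) := by gcongr
    have hden : 0 < 2 * σ₁ ^ 2 * σ₂ ^ 2 := by positivity
    calc 3 * (σ₂ / σ₁ - 1) = 6 * σ₁ * σ₂ ^ 2 * (σ₂ - σ₁) / (2 * σ₁ ^ 2 * σ₂ ^ 2) := by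
          field_simp; ring
      _ < c ^ 2 * ((σ₂ - σ₁) * (σ₂ + σ₁)) / (2 * σ₁ ^ 2 * σ₂ ^ 2) :=
          div_lt_div_of_pos_right hnum hden
      _ = c ^ 2 / (2 * σ₁ ^ 2) - c ^ 2 / (2 * σ₂ ^ 2) := by field_simp; ring
  linarith

lemma gaussPdf_div_div_pow_three_lt {c σ₁ σ₂ : ℝ} (hσ₁ : 0 < σ₁) (h₁₂ : σ₁ < σ₂)
    (hreg : sqrt 3 < c / σ₂) :
    gaussPdf (c / σ₁) / σ₁ ^ 3 < gaussPdf (c / σ₂) / σ₂ ^ 3 := by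
  have hσ₂ : 0 < σ₂ := hσ₁.trans h₁₂
  have hc : 3 * σ₂ ^ 2 < c ^ 2 := by
    have := lt_sq_of_sqrt_lt hreg
    rwa [div_pow, lt_div_iff₀ (by positivity)] at this
  rw [gaussPdf_div_div_pow_three c hσ₁, gaussPdf_div_div_pow_three c hσ₂]
  exact div_lt_div_of_pos_right (exp_lt_exp.2 (neg_sq_div_sub_log_lt hσ₁ h₁₂ hc))
    (by positivity)

/-- under the regime condition `u_q(θ) > √3` and `u_p(θ) > √3`
(equivalently `σ_q < c_q/√3` and `σ_p < c_p/√3`) throughout `[0, π/2]`, the balance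
function `B` is strictly monotone increasing on `[0, π/2]`. -/
theorem balance_strictMonoOn (η γ r : ℝ) (hη : η ∈ Set.Ioo (0 : ℝ) 1)
    (hγ : 0 < γ) (hr : 0 < r)
    (hreg : ∀ θ ∈ Set.Icc (0 : ℝ) (Real.pi / 2),
      Real.sqrt 3 < uq η γ r θ ∧ Real.sqrt 3 < up η γ r θ) :
    StrictMonoOn (balance η γ r) (Set.Icc 0 (Real.pi / 2)) := by
  intro θ₁ h₁ θ₂ h₂ h₁₂
  have hs := s0_pos hη
  have hq : gaussPdf (uq η γ r θ₁) / sigq η γ θ₁ ^ 3 < gaussPdf (uq η γ r θ₂) / sigq η γ θ₂ ^ 3 :=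
    gaussPdf_div_div_pow_three_lt (sigq_pos hs hγ.le θ₁)
      (sigq_strictMonoOn hs.le hγ h₁ h₂ h₁₂) (hreg θ₂ h₂).1
  have hp : gaussPdf (up η γ r θ₂) / sigp η γ θ₂ ^ 3 < gaussPdf (up η γ r θ₁) / sigp η γ θ₁ ^ 3 :=
    gaussPdf_div_div_pow_three_lt (sigp_pos hs hγ.le θ₂)
      (sigp_strictAntiOn hs.le hγ h₁ h₂ h₁₂) (hreg θ₁ h₁).2
  simp only [balance, mul_div_assoc]
  gcongr
end

section
/- Fix η ∈ (0,1), γ > 0, r > 0 with the associated balance function B(θ) = r²·φ(u_q(θ))/σ_q(θ)³ − φ(u_p(θ))/σ_p(θ)³. Suppose the regime condition u_q(θ) > √3 and u_p(θ) > √3 holds for every θ ∈ [0, π/2], and suppose B(0) < 0 and B(π/2) > 0. Then there exists a unique θ* ∈ (0, π/2) with B(θ*) = 0. -/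
/-!
With `s = σ²`, each term of `B` has the form `φ(c/√s)/s^{3/2}`, whose logarithm
`-c²/(2s) - (3/2) log s` has derivative `(c² - 3s)/(2s²)`. The regime condition `c/√s > √3` is
exactly `3s < c²`, so both terms increase strictly with the variance. As `θ` runs over `[0, π/2]`,
`σ_q²` increases and `σ_p²` decreases, hence `B` is continuous and strictly increasing, and its
sign change yields exactly one root.
-/

open Real Set

noncomputable def gaussPdfScaled (c s : ℝ) : ℝ := gaussPdf (c / √s) / √s ^ 3

noncomputable def logGaussPdfScaled (c s : ℝ) : ℝ := -c ^ 2 / (2 * s) - 3 / 2 * log s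

lemma gaussPdfScaled_eq_exp {c s : ℝ} (hs : 0 < s) :
    gaussPdfScaled c s = exp (logGaussPdfScaled c s) / √(2 * π) := by
  have hsq : (c / √s) ^ 2 = c ^ 2 / s := by rw [div_pow, sq_sqrt hs.le]
  have hcube : √s ^ 3 = exp (3 / 2 * log s) := by
    rw [← exp_log (sqrt_pos.2 hs), log_sqrt hs.le, ← exp_nat_mul]
    ring_nf
  rw [gaussPdfScaled, gaussPdf, hsq, hcube, div_div, mul_comm, ← div_div, ← exp_sub,
    logGaussPdfScaled]
  ring_nf

lemma hasDerivAt_logGaussPdfScaled (c : ℝ) {s : ℝ} (hs : 0 < s) :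
    HasDerivAt (logGaussPdfScaled c) ((c ^ 2 - 3 * s) / (2 * s ^ 2)) s := by
  have hinv : HasDerivAt (fun x : ℝ => -c ^ 2 / 2 * x⁻¹) (-c ^ 2 / 2 * -(s ^ 2)⁻¹) s :=
    (hasDerivAt_inv hs.ne').const_mul _
  have hfun : ((fun x => -c ^ 2 / 2 * x⁻¹) - fun x => 3 / 2 * log x) = logGaussPdfScaled c := by
    funext x
    rw [Pi.sub_apply, logGaussPdfScaled]
    ring
  refine (hfun ▸ hinv.sub ((hasDerivAt_log hs.ne').const_mul (3 / 2))).congr_deriv ?_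
  field_simp

lemma strictMonoOn_logGaussPdfScaled (c : ℝ) :
    StrictMonoOn (logGaussPdfScaled c) (Ioc 0 (c ^ 2 / 3)) := by
  refine strictMonoOn_of_deriv_pos (convex_Ioc _ _)
    (fun x hx => (hasDerivAt_logGaussPdfScaled c hx.1).continuousAt.continuousWithinAt) ?_
  intro x hx
  rw [interior_Ioc] at hx
  rw [(hasDerivAt_logGaussPdfScaled c hx.1).deriv]
  have : 3 * x < c ^ 2 := by linarith [hx.2]
  exact div_pos (by linarith) (mul_pos two_pos (pow_pos hx.1 2))

lemma strictMonoOn_gaussPdfScaled (c : ℝ) :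
    StrictMonoOn (gaussPdfScaled c) (Ioc 0 (c ^ 2 / 3)) := by
  intro s hs t ht hst
  rw [gaussPdfScaled_eq_exp hs.1, gaussPdfScaled_eq_exp ht.1]
  exact div_lt_div_of_pos_right (exp_lt_exp.2 (strictMonoOn_logGaussPdfScaled c hs ht hst))
    (by positivity)

lemma mem_Ioc_sq_div_three_of_sqrt_three_lt {c s : ℝ} (hs : 0 < s) (h : √3 < c / √s) :
    s ∈ Ioc 0 (c ^ 2 / 3) := by
  have hlt : √(3 * s) < c := by
    rwa [sqrt_mul (by norm_num), ← lt_div_iff₀ (sqrt_pos.2 hs)]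
  have := (sqrt_lt' ((sqrt_nonneg _).trans_lt hlt)).1 hlt
  exact ⟨hs, by linarith⟩

lemma sin_sq_lt_sin_sq {x y : ℝ} (hx : 0 ≤ x) (hxy : x < y) (hy : y ≤ π / 2) :
    sin x ^ 2 < sin y ^ 2 :=
  pow_lt_pow_left₀ (sin_lt_sin_of_lt_of_le_pi_div_two (by linarith [pi_pos]) hy hxy)
    (sin_nonneg_of_nonneg_of_le_pi hx (by linarith [pi_pos])) two_ne_zero

lemma s0_pos_s6 {η : ℝ} (h₀ : 0 < η) (h₁ : η < 1) : 0 < s0 η :=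
  div_pos (by linarith) (by linarith)

lemma balance_eq (η γ r θ : ℝ) :
    balance η γ r θ = r ^ 2 * gaussPdfScaled (aGKP * r / 2) (s0 η + γ * sin θ ^ 2)
      - gaussPdfScaled (aGKP / (2 * r)) (s0 η + γ * cos θ ^ 2) := by
  rw [balance, mul_div_assoc]
  rfl

lemma strictMonoOn_balance {η γ r : ℝ} (hs : 0 < s0 η) (hγ : 0 < γ) (hr : 0 < r)
    (hreg : ∀ θ ∈ Icc (0 : ℝ) (π / 2), √3 < uq η γ r θ ∧ √3 < up η γ r θ) :
    StrictMonoOn (balance η γ r) (Icc 0 (π / 2)) := by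
  have hq : ∀ θ ∈ Icc (0 : ℝ) (π / 2),
      s0 η + γ * sin θ ^ 2 ∈ Ioc 0 ((aGKP * r / 2) ^ 2 / 3) := fun θ hθ =>
    mem_Ioc_sq_div_three_of_sqrt_three_lt (add_pos_of_pos_of_nonneg hs (by positivity))
      (hreg θ hθ).1
  have hp : ∀ θ ∈ Icc (0 : ℝ) (π / 2),
      s0 η + γ * cos θ ^ 2 ∈ Ioc 0 ((aGKP / (2 * r)) ^ 2 / 3) := fun θ hθ =>
    mem_Ioc_sq_div_three_of_sqrt_three_lt (add_pos_of_pos_of_nonneg hs (by positivity))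
      (hreg θ hθ).2
  intro x hx y hy hxy
  have hsin := sin_sq_lt_sin_sq hx.1 hxy hy.2
  have hcos : cos y ^ 2 < cos x ^ 2 := by
    rw [cos_sq', cos_sq']
    linarith
  have hqxy := strictMonoOn_gaussPdfScaled _ (hq x hx) (hq y hy) (by gcongr)
  have hpyx := strictMonoOn_gaussPdfScaled _ (hp y hy) (hp x hx) (by gcongr)
  rw [balance_eq, balance_eq]
  linarith [mul_lt_mul_of_pos_left hqxy (pow_pos hr 2)]

lemma continuous_balance {η γ : ℝ} (hs : 0 < s0 η) (hγ : 0 ≤ γ) (r : ℝ) :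
    Continuous (balance η γ r) := by
  have hq : ∀ θ, sigq η γ θ ≠ 0 := fun θ =>
    (sqrt_pos.2 (add_pos_of_pos_of_nonneg hs (by positivity))).ne'
  have hp : ∀ θ, sigp η γ θ ≠ 0 := fun θ =>
    (sqrt_pos.2 (add_pos_of_pos_of_nonneg hs (by positivity))).ne'
  have : Continuous gaussPdf := by unfold gaussPdf; fun_prop
  have : Continuous (sigq η γ) := by unfold sigq; fun_prop
  have : Continuous (sigp η γ) := by unfold sigp; fun_prop
  unfold balance uq up
  fun_prop (disch := simp [hq, hp])

/-- under the regime condition, if `B(0) < 0 < B(π/2)` then there exists a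
unique `θ* ∈ (0, π/2)` with `B(θ*) = 0`. -/
theorem balance_unique_root (η γ r : ℝ) (hη : η ∈ Set.Ioo (0 : ℝ) 1)
    (hγ : 0 < γ) (hr : 0 < r)
    (hreg : ∀ θ ∈ Set.Icc (0 : ℝ) (Real.pi / 2),
      Real.sqrt 3 < uq η γ r θ ∧ Real.sqrt 3 < up η γ r θ)
    (hB0 : balance η γ r 0 < 0) (hB1 : 0 < balance η γ r (Real.pi / 2)) :
    ∃! θ : ℝ, θ ∈ Set.Ioo 0 (Real.pi / 2) ∧ balance η γ r θ = 0 := by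
  have hs := s0_pos_s6 hη.1 hη.2
  have hmono := strictMonoOn_balance hs hγ hr hreg
  obtain ⟨θ, hθ, hroot⟩ := intermediate_value_Ioo (by positivity)
    (continuous_balance hs hγ.le r).continuousOn ⟨hB0, hB1⟩
  refine ⟨θ, ⟨hθ, hroot⟩, fun θ' ⟨hθ', hroot'⟩ => ?_⟩
  exact hmono.injOn (Ioo_subset_Icc_self hθ') (Ioo_subset_Icc_self hθ) (hroot'.trans hroot.symm)
end

section
/- Fix γ ≥ 0 and D ∈ ℕ. The Gaussian dephasing kernel matrix K ∈ Matrix (Fin D) (Fin D) ℝ defined by K m n = e^{−γ (m − n)² / 2} is positive semidefinite, and the Fock-space dephasing map ρ ↦ K ⊙ ρ (entrywise/Hadamard product, i.e. (K ⊙ ρ) m n = e^{−γ(m−n)²/2} · ρ m n) on D×D complex matrices maps positive semidefinite matrices to positive semidefinite matrices and preserves the trace. -/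
open scoped ComplexOrder

/-!
Expanding `e^{γab}` in its power series gives
`e^{-γ(a-b)²/2} = ∑ₖ (γᵏ/k!) gₖ(a) gₖ(b)` with `gₖ(a) = e^{-γa²/2} aᵏ`, so for `γ ≥ 0` the kernel
matrix is a convergent sum of nonnegative multiples of rank-one positive semidefinite matrices;
the positive semidefinite cone is closed, hence contains the sum. The Schur product theorem then
makes `ρ ↦ K ⊙ ρ` positivity preserving, and it preserves the trace because `K` has unit diagonal.
-/

namespace Matrix

variable {n R : Type*} [Ring R] [PartialOrder R] [StarRing R] [TopologicalSpace R]
  [IsTopologicalRing R] [ContinuousStar R] [OrderClosedTopology R]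

theorem isClosed_setOf_posSemidef : IsClosed {A : Matrix n n R | A.PosSemidef} := by
  have hHerm : IsClosed {A : Matrix n n R | A.IsHermitian} :=
    isClosed_eq continuous_id.matrix_conjTranspose continuous_id
  have hForm (x : n →₀ R) : IsClosed {A : Matrix n n R |
      0 ≤ x.sum fun i xi ↦ x.sum fun j xj ↦ star xi * A i j * xj} :=
    isClosed_le continuous_const <| continuous_finsetSum _ fun i _ ↦
      continuous_finsetSum _ fun j _ ↦
        (continuous_const.mul (continuous_id.matrix_elem i j)).mul continuous_const
  simpa only [PosSemidef, Set.ofPred_and, Set.ofPred_forall] using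
    hHerm.inter (isClosed_iInter hForm)

theorem PosSemidef.of_hasSum [AddLeftMono R] {ι : Type*} {A : ι → Matrix n n R}
    {B : Matrix n n R} (hA : ∀ i, (A i).PosSemidef) (hB : HasSum A B) : B.PosSemidef :=
  isClosed_setOf_posSemidef.mem_of_tendsto hB <|
    .of_forall fun s ↦ posSemidef_sum s fun i _ ↦ hA i

end Matrix

theorem Real.hasSum_gaussian_mul_gaussian (γ a b : ℝ) :
    HasSum (fun k : ℕ ↦
        γ ^ k / k.factorial * (exp (-γ * a ^ 2 / 2) * a ^ k) * (exp (-γ * b ^ 2 / 2) * b ^ k))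
      (exp (-γ * (a - b) ^ 2 / 2)) := by
  have hsplit : exp (-γ * (a - b) ^ 2 / 2) =
      exp (-γ * a ^ 2 / 2) * exp (-γ * b ^ 2 / 2) * exp (γ * a * b) := by
    rw [← exp_add, ← exp_add]; ring_nf
  have h := (NormedSpace.expSeries_div_hasSum_exp (γ * a * b)).mul_left
    (exp (-γ * a ^ 2 / 2) * exp (-γ * b ^ 2 / 2))
  rw [← exp_eq_exp_ℝ, ← hsplit] at h
  exact h.congr_fun fun k ↦ by ring

theorem Matrix.posSemidef_gaussianKernel {𝕜 n : Type*} [RCLike 𝕜] [Finite n] {γ : ℝ}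
    (hγ : 0 ≤ γ) (x : n → ℝ) :
    (of fun i j ↦ ((Real.exp (-γ * (x i - x j) ^ 2 / 2) : ℝ) : 𝕜)).PosSemidef := by
  set g : ℕ → n → 𝕜 := fun k i ↦ ((Real.exp (-γ * x i ^ 2 / 2) * x i ^ k : ℝ) : 𝕜)
  refine PosSemidef.of_hasSum
    (A := fun k ↦ (γ ^ k / k.factorial : ℝ) • vecMulVec (g k) (star (g k)))
    (fun k ↦ (posSemidef_vecMulVec_self_star _).smul (by positivity)) ?_
  have hentry (i j : n) : HasSum (fun k ↦ (γ ^ k / k.factorial : ℝ) • (g k i * star (g k j)))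
      ((Real.exp (-γ * (x i - x j) ^ 2 / 2) : ℝ) : 𝕜) := by
    simp only [g, RCLike.star_def, RCLike.conj_ofReal, RCLike.real_smul_eq_coe_mul,
      ← RCLike.ofReal_mul, RCLike.hasSum_ofReal]
    exact (Real.hasSum_gaussian_mul_gaussian γ (x i) (x j)).congr_fun fun k ↦ by ring
  exact Pi.hasSum.mpr fun i ↦ Pi.hasSum.mpr fun j ↦ hentry i j

/-- for `γ ≥ 0` and Fock cutoff `D`, the Gaussian dephasing kernel
`K m n = e^{-γ(m-n)²/2}` is positive semidefinite, and the entrywise (Hadamard)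
dephasing map `ρ ↦ K ⊙ ρ` sends positive semidefinite matrices to positive
semidefinite matrices and preserves the trace. -/
theorem dephasing_kernel_psd_and_channel (γ : ℝ) (hγ : 0 ≤ γ) (D : ℕ) :
    let K : Matrix (Fin D) (Fin D) ℝ :=
      Matrix.of fun m n => Real.exp (-γ * ((m : ℝ) - (n : ℝ)) ^ 2 / 2)
    K.PosSemidef ∧
    ∀ ρ : Matrix (Fin D) (Fin D) ℂ, ρ.PosSemidef →
      (Matrix.of fun m n => (K m n : ℂ) * ρ m n : Matrix (Fin D) (Fin D) ℂ).PosSemidef ∧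
      (Matrix.of fun m n => (K m n : ℂ) * ρ m n : Matrix (Fin D) (Fin D) ℂ).trace =
        ρ.trace := by
  intro K
  have hK (𝕜 : Type) [RCLike 𝕜] : (Matrix.of fun m n ↦ ((K m n : ℝ) : 𝕜)).PosSemidef :=
    Matrix.posSemidef_gaussianKernel hγ _
  refine ⟨hK ℝ, fun ρ hρ ↦ ⟨(hK ℂ).hadamard hρ, ?_⟩⟩
  simp [Matrix.trace, K]
end
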